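/- Let V ∈ P(n,m) and G ⊂ 𝒫ⁿ. (1) If L > 0 and G is an (m,L)-Lipschitz graph over V, then for every p ∈ G and every s > L one has (G \ {p}) \ X(p,V,s) = ∅. (2) If 0 < s < 1 and (G \ {p}) \ X(p,V,s) = ∅ for every p ∈ G, then G is an (m,L)-Lipschitz graph over V with L = s/√(1 − s²). -/

import Mathlib

open MeasureTheory Metric Set Filter
open scoped ENNReal NNReal Topology

noncomputable section

/-- Euclidean `ℝ^(n+1)`, realized as the `L²`-product `ℝⁿ × ℝ`. -/
abbrev EucP (n : ℕ) : Type := WithLp 2 (EuclideanSpace ℝ (Fin n) × ℝ)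

instance (n : ℕ) : MeasurableSpace (EucP n) := borel _
instance (n : ℕ) : BorelSpace (EucP n) := ⟨rfl⟩

/-- The parabolic space `𝒫ⁿ = ℝⁿ × ℝ`, a type synonym of `ℝⁿ × ℝ` carrying the
parabolic metric `d(p,q) = ‖p - q‖` with `‖(x,t)‖ = √(|x|² + |t|)`. -/
def Para (n : ℕ) : Type := EuclideanSpace ℝ (Fin n) × ℝ

namespace Para

variable {n : ℕ}

instance : AddCommGroup (Para n) :=
  inferInstanceAs (AddCommGroup (EuclideanSpace ℝ (Fin n) × ℝ))

instance : Module ℝ (Para n) :=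
  inferInstanceAs (Module ℝ (EuclideanSpace ℝ (Fin n) × ℝ))

/-- Build a point of `𝒫ⁿ` from a pair `(x, t)`. -/
def ofProd (p : EuclideanSpace ℝ (Fin n) × ℝ) : Para n := p

/-- The spatial (horizontal) component `x` of `p = (x,t)`. -/
def x (p : Para n) : EuclideanSpace ℝ (Fin n) :=
  (show EuclideanSpace ℝ (Fin n) × ℝ from p).1

/-- The time (vertical) component `t` of `p = (x,t)`. -/
def t (p : Para n) : ℝ := (show EuclideanSpace ℝ (Fin n) × ℝ from p).2

lemma ext' {p q : Para n} (h1 : p.x = q.x) (h2 : p.t = q.t) : p = q := by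
  have : (show EuclideanSpace ℝ (Fin n) × ℝ from p)
      = (show EuclideanSpace ℝ (Fin n) × ℝ from q) := Prod.ext h1 h2
  exact this

lemma x_sub (p q : Para n) : (p - q).x = p.x - q.x := rfl
lemma t_sub (p q : Para n) : (p - q).t = p.t - q.t := rfl
lemma x_add (p q : Para n) : (p + q).x = p.x + q.x := rfl
lemma t_add (p q : Para n) : (p + q).t = p.t + q.t := rfl
lemma x_zero : (0 : Para n).x = 0 := rfl
lemma t_zero : (0 : Para n).t = 0 := rfl

/-- The parabolic norm `‖(x,t)‖ = √(|x|² + |t|)`. -/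
def pnorm (p : Para n) : ℝ := Real.sqrt (‖p.x‖ ^ 2 + |p.t|)

lemma pnorm_zero : pnorm (0 : Para n) = 0 := by
  simp [pnorm, x_zero, t_zero]

lemma pnorm_neg (p : Para n) : pnorm (-p) = pnorm p := by
  have hx : (-p).x = -p.x := rfl
  have ht : (-p).t = -p.t := rfl
  simp [pnorm, hx, ht]

lemma pnorm_add_le (p q : Para n) : pnorm (p + q) ≤ pnorm p + pnorm q := by
  have hx : ‖(p + q).x‖ ≤ ‖p.x‖ + ‖q.x‖ := by rw [x_add]; exact norm_add_le _ _
  have ht : |(p + q).t| ≤ |p.t| + |q.t| := by rw [t_add]; exact abs_add_le _ _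
  have hB : (0:ℝ) ≤ ‖p.x‖ ^ 2 + |p.t| := by positivity
  have hC : (0:ℝ) ≤ ‖q.x‖ ^ 2 + |q.t| := by positivity
  have h1 : ‖p.x‖ ≤ Real.sqrt (‖p.x‖ ^ 2 + |p.t|) :=
    (Real.le_sqrt (norm_nonneg _) hB).mpr (le_add_of_nonneg_right (abs_nonneg _))
  have h2 : ‖q.x‖ ≤ Real.sqrt (‖q.x‖ ^ 2 + |q.t|) :=
    (Real.le_sqrt (norm_nonneg _) hC).mpr (le_add_of_nonneg_right (abs_nonneg _))
  have e1 : Real.sqrt (‖p.x‖ ^ 2 + |p.t|) ^ 2 = ‖p.x‖ ^ 2 + |p.t| := Real.sq_sqrt hB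
  have e2 : Real.sqrt (‖q.x‖ ^ 2 + |q.t|) ^ 2 = ‖q.x‖ ^ 2 + |q.t| := Real.sq_sqrt hC
  have hmul : ‖p.x‖ * ‖q.x‖ ≤
      Real.sqrt (‖p.x‖ ^ 2 + |p.t|) * Real.sqrt (‖q.x‖ ^ 2 + |q.t|) :=
    mul_le_mul h1 h2 (norm_nonneg _) (Real.sqrt_nonneg _)
  unfold pnorm
  rw [show Real.sqrt (‖p.x‖ ^ 2 + |p.t|) + Real.sqrt (‖q.x‖ ^ 2 + |q.t|)
      = Real.sqrt ((Real.sqrt (‖p.x‖ ^ 2 + |p.t|) + Real.sqrt (‖q.x‖ ^ 2 + |q.t|)) ^ 2) from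
      (Real.sqrt_sq (by positivity)).symm]
  apply Real.sqrt_le_sqrt
  have hxx : ‖(p + q).x‖ * ‖(p + q).x‖ ≤ (‖p.x‖ + ‖q.x‖) * (‖p.x‖ + ‖q.x‖) :=
    mul_le_mul hx hx (norm_nonneg _) (by positivity)
  nlinarith [norm_nonneg (p + q).x, abs_nonneg (p + q).t]

instance : MetricSpace (Para n) where
  dist p q := pnorm (p - q)
  dist_self p := by
    show pnorm (p - p) = 0
    rw [sub_self, pnorm_zero]
  dist_comm p q := by
    show pnorm (p - q) = pnorm (q - p)
    rw [← neg_sub q p, pnorm_neg]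
  dist_triangle p q r := by
    show pnorm (p - r) ≤ pnorm (p - q) + pnorm (q - r)
    have h := pnorm_add_le (p - q) (q - r)
    rwa [sub_add_sub_cancel] at h
  eq_of_dist_eq_zero := by
    intro p q h
    have h' : pnorm (p - q) = 0 := h
    have hB : (0:ℝ) ≤ ‖(p - q).x‖ ^ 2 + |(p - q).t| := by positivity
    have h0 : ‖(p - q).x‖ ^ 2 + |(p - q).t| = 0 := by
      have := (Real.sqrt_eq_zero hB).mp h'
      exact this
    have hx : ‖(p - q).x‖ ^ 2 = 0 := by nlinarith [sq_nonneg ‖(p - q).x‖, abs_nonneg (p - q).t]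
    have ht : |(p - q).t| = 0 := by nlinarith [sq_nonneg ‖(p - q).x‖, abs_nonneg (p - q).t]
    have hx' : (p - q).x = 0 := by
      have := pow_eq_zero_iff (n := 2) (by norm_num) |>.mp hx
      exact norm_eq_zero.mp this
    have ht' : (p - q).t = 0 := abs_eq_zero.mp ht
    have : p - q = 0 := ext' (by rw [hx']; rfl) (by rw [ht']; rfl)
    exact sub_eq_zero.mp this

lemma dist_def (p q : Para n) : dist p q = pnorm (p - q) := rfl

instance : MeasurableSpace (Para n) := borel (Para n)
instance : BorelSpace (Para n) := ⟨rfl⟩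

/-- The identity map from the parabolic space to Euclidean `ℝ^(n+1)`. -/
def toEuc (p : Para n) : EucP n :=
  WithLp.toLp 2 (show EuclideanSpace ℝ (Fin n) × ℝ from p)

/-- The identity map from Euclidean `ℝ^(n+1)` to the parabolic space. -/
def ofEuc (p : EucP n) : Para n := WithLp.ofLp p

/-- The identity, as a linear equivalence between the parabolic space and Euclidean
`ℝ^(n+1)`. -/
def eucEquiv : Para n ≃ₗ[ℝ] EucP n where
  toFun := toEuc
  invFun := ofEuc
  map_add' _ _ := rfl
  map_smul' _ _ := rfl
  left_inv _ := rfl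
  right_inv _ := rfl

/-- The orthogonal complement (in Euclidean `ℝ^(n+1)`) of a subspace of `𝒫ⁿ`. -/
def perp (V : Submodule ℝ (Para n)) : Submodule ℝ (Para n) :=
  Submodule.comap (eucEquiv (n := n)).toLinearMap
    ((Submodule.map (eucEquiv (n := n)).toLinearMap V)ᗮ)

/-- `H(n,m)`: the horizontal homogeneous subspaces, i.e. `m`-dimensional linear
subspaces of `ℝⁿ × {0}`. -/
def Horiz (n m : ℕ) : Set (Submodule ℝ (Para n)) :=
  {V | Module.finrank ℝ V = m ∧ ∀ p ∈ V, Para.t p = 0}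

/-- `V(n,m)`: the vertical homogeneous subspaces, i.e. `(m-1)`-dimensional linear
subspaces of `ℝⁿ × ℝ` containing the `t`-axis `{0} × ℝ`. -/
def Vert (n m : ℕ) : Set (Submodule ℝ (Para n)) :=
  {V | Module.finrank ℝ V = m - 1 ∧ ofProd (0, 1) ∈ V}

/-- `P(n,m) = H(n,m) ∪ V(n,m)`, the homogeneous subspaces of parabolic Hausdorff
dimension `m`. -/
def PSet (n m : ℕ) : Set (Submodule ℝ (Para n)) := Horiz n m ∪ Vert n m

/-- The parabolic cone `X(a,V,s) = {q : d(q - a, V) < s ‖q - a‖}`. -/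
def cone (a : Para n) (V : Set (Para n)) (s : ℝ) : Set (Para n) :=
  {q | Metric.infDist (q - a) V < s * dist q a}

/-- `G` is an `(m,L)`-Lipschitz graph over `V ∈ P(n,m)`: there are `A ⊆ V` and
`g : A → V^⊥` which is `L`-Lipschitz for the parabolic norm, with
`G = {p + g(p) : p ∈ A}`. -/
def IsLipGraphOver (n m : ℕ) (L : ℝ) (V : Submodule ℝ (Para n)) (G : Set (Para n)) : Prop :=
  V ∈ PSet n m ∧ ∃ (A : Set (Para n)) (g : Para n → Para n),
    A ⊆ (V : Set (Para n)) ∧ (∀ p ∈ A, g p ∈ perp V) ∧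
    (∀ p ∈ A, ∀ q ∈ A, pnorm (g p - g q) ≤ L * pnorm (p - q)) ∧
    G = (fun p => p + g p) '' A

/-- `G` is an `(m,L)`-Lipschitz graph (over some `V ∈ P(n,m)`). -/
def IsLipGraph (n m : ℕ) (L : ℝ) (G : Set (Para n)) : Prop :=
  ∃ V, IsLipGraphOver n m L V G

/-- `E` is `(m,L)`-rectifiable: `ℋ^m`-almost all of `E` is covered by countably many
`(m,L)`-Lipschitz graphs. -/
def MLRect (n m : ℕ) (L : ℝ) (E : Set (Para n)) : Prop :=
  ∃ G : ℕ → Set (Para n), (∀ i, IsLipGraph n m L (G i)) ∧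
    μH[(m : ℝ)] (E \ ⋃ i, G i) = 0

/-- `E` is LG `m`-rectifiable: for every `L > 0`, `ℋ^m`-almost all of `E` is covered
by countably many `(m,L)`-Lipschitz graphs. -/
def LGRect (n m : ℕ) (E : Set (Para n)) : Prop :=
  ∀ L : ℝ, 0 < L → MLRect n m L E


end Para

open Para

/-!
Every `V ∈ P(n,m)` splits `𝒫ⁿ` as `V ⊕ V^⊥` with a parabolic Pythagoras identity
`‖v + w‖² = ‖v‖² + ‖w‖²`: the spatial parts are Euclidean-orthogonal, and the time
coordinate lives entirely in `V` (vertical case) or entirely in `V^⊥` (horizontal case), so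
`|t|` is additive as well. Hence `d(v + w, V) = ‖w‖`, and the cone condition for `q` at `p`
just compares the `V^⊥`-part of `q - p` with `q - p` itself. For a Lipschitz graph this part is
at most `L` times the `V`-part, which gives (1). Conversely, the cone condition with aperture
`s` bounds the `V^⊥`-part by `s / √(1 - s²)` times the `V`-part, so the projection of `G` to `V`
is injective and `G` is the graph of the `V^⊥`-part over its image, which gives (2).
-/

namespace Para

variable {n m : ℕ} {V : Submodule ℝ (Para n)}

lemma pnorm_nonneg (p : Para n) : 0 ≤ pnorm p := Real.sqrt_nonneg _

lemma pnorm_sq (p : Para n) : pnorm p ^ 2 = ‖p.x‖ ^ 2 + |p.t| :=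
  Real.sq_sqrt (by positivity)

lemma inner_toEuc (v w : Para n) :
    inner ℝ (toEuc v) (toEuc w) = inner ℝ v.x w.x + v.t * w.t := by
  rw [WithLp.prod_inner_apply, RCLike.inner_apply', conj_trivial]; rfl

lemma mem_perp_iff {w : Para n} :
    w ∈ perp V ↔ ∀ v ∈ V, inner ℝ v.x w.x + v.t * w.t = 0 := by
  simp only [perp, Submodule.mem_comap, Submodule.mem_orthogonal, Submodule.mem_map,
    forall_exists_index, and_imp, forall_apply_eq_imp_iff₂, ← inner_toEuc]
  rfl

lemma t_mul_t_eq_zero_of_mem_perp (hV : V ∈ PSet n m) {v w : Para n} (hv : v ∈ V)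
    (hw : w ∈ perp V) : v.t * w.t = 0 := by
  rcases hV with hH | hVert
  · rw [hH.2 v hv, zero_mul]
  · have h := mem_perp_iff.1 hw _ hVert.2
    have hwt : w.t = 0 := by
      change inner ℝ (0 : EuclideanSpace ℝ (Fin n)) w.x + 1 * w.t = 0 at h
      simpa using h
    rw [hwt, mul_zero]

lemma pnorm_add_sq_of_mem_perp (hV : V ∈ PSet n m) {v w : Para n} (hv : v ∈ V)
    (hw : w ∈ perp V) : pnorm (v + w) ^ 2 = pnorm v ^ 2 + pnorm w ^ 2 := by
  have ht := t_mul_t_eq_zero_of_mem_perp hV hv hw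
  have hx : inner ℝ v.x w.x = 0 := by linarith [mem_perp_iff.1 hw v hv]
  have habs : |v.t + w.t| = |v.t| + |w.t| := by
    rcases mul_eq_zero.1 ht with h | h <;> simp [h]
  rw [pnorm_sq, pnorm_sq, pnorm_sq, x_add, t_add, habs, norm_add_sq_real, hx]
  ring

lemma pnorm_left_le_pnorm_add_of_mem_perp (hV : V ∈ PSet n m) {v w : Para n} (hv : v ∈ V)
    (hw : w ∈ perp V) : pnorm v ≤ pnorm (v + w) := by
  nlinarith [pnorm_add_sq_of_mem_perp hV hv hw, pnorm_nonneg v, pnorm_nonneg (v + w)]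

lemma pnorm_right_le_pnorm_add_of_mem_perp (hV : V ∈ PSet n m) {v w : Para n} (hv : v ∈ V)
    (hw : w ∈ perp V) : pnorm w ≤ pnorm (v + w) := by
  nlinarith [pnorm_add_sq_of_mem_perp hV hv hw, pnorm_nonneg w, pnorm_nonneg (v + w)]

lemma exists_add_mem_perp (V : Submodule ℝ (Para n)) (u : Para n) :
    ∃ v ∈ V, ∃ w ∈ perp V, v + w = u := by
  obtain ⟨y, ⟨v, hv, rfl⟩, w, hw, hu⟩ :=
    Submodule.exists_add_mem_mem_orthogonal (K := V.map eucEquiv.toLinearMap) (toEuc u)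
  exact ⟨v, hv, ofEuc w, hw, congrArg ofEuc hu.symm⟩

lemma infDist_add_of_mem_perp (hV : V ∈ PSet n m) {v w : Para n} (hv : v ∈ V)
    (hw : w ∈ perp V) : infDist (v + w) (V : Set (Para n)) = pnorm w := by
  refine le_antisymm ?_ ((le_infDist ⟨0, V.zero_mem⟩).2 fun y hy => ?_)
  · simpa [dist_def] using infDist_le_dist_of_mem (x := v + w) (SetLike.mem_coe.2 hv)
  · rw [dist_def, show v + w - y = (v - y) + w by abel]
    exact pnorm_right_le_pnorm_add_of_mem_perp hV (V.sub_mem hv hy) hw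

lemma mem_cone_iff_of_sub_eq_add (hV : V ∈ PSet n m) {p q v w : Para n} {s : ℝ} (hv : v ∈ V)
    (hw : w ∈ perp V) (hqp : q - p = v + w) :
    q ∈ cone p V s ↔ pnorm w < s * pnorm (v + w) := by
  rw [cone, mem_ofPred_eq, dist_def, hqp, infDist_add_of_mem_perp hV hv hw]

end Para

lemma le_div_sqrt_one_sub_sq_mul {a b s : ℝ} (ha : 0 ≤ a) (hb : 0 ≤ b) (hs : 0 ≤ s)
    (hs1 : s < 1) (h : a ^ 2 ≤ s ^ 2 * (b ^ 2 + a ^ 2)) : a ≤ s / √(1 - s ^ 2) * b := by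
  have hs2 : 0 < 1 - s ^ 2 := by nlinarith
  have hsq : (a * √(1 - s ^ 2)) ^ 2 ≤ (s * b) ^ 2 := by
    rw [mul_pow, Real.sq_sqrt hs2.le]; nlinarith
  rw [div_mul_eq_mul_div, le_div_iff₀ (Real.sqrt_pos.2 hs2)]
  exact (pow_le_pow_iff_left₀ (by positivity) (by positivity) two_ne_zero).1 hsq

lemma Set.eq_image_add_invFunOn {E : Type*} [Add E] [Nonempty E] {G : Set E} {v w : E → E}
    (hvw : ∀ q, v q + w q = q) (hinj : InjOn v G) :
    G = (fun p => p + w (Function.invFunOn v G p)) '' (v '' G) := by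
  rw [image_image, image_congr fun q hq => by rw [hinj.leftInvOn_invFunOn hq, hvw], image_id']

namespace Para

variable {n m : ℕ} {V : Submodule ℝ (Para n)} {G : Set (Para n)}

lemma diff_cone_eq_empty_of_isLipGraphOver {L s : ℝ} (hL : 0 ≤ L) (hLs : L < s)
    (hG : IsLipGraphOver n m L V G) {p : Para n} (hp : p ∈ G) :
    (G \ {p}) \ cone p V s = ∅ := by
  obtain ⟨hV, A, g, hAV, hgperp, hlip, rfl⟩ := hG
  obtain ⟨b, hb, rfl⟩ := hp
  refine sdiff_eq_empty.2 ?_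
  rintro _ ⟨⟨a, ha, rfl⟩, hne⟩
  have hv : a - b ∈ V := V.sub_mem (hAV ha) (hAV hb)
  have hw : g a - g b ∈ perp V := (perp V).sub_mem (hgperp a ha) (hgperp b hb)
  rw [mem_cone_iff_of_sub_eq_add hV hv hw (add_sub_add_comm _ _ _ _)]
  have hpos : 0 < pnorm (a - b + (g a - g b)) := by
    rw [← add_sub_add_comm, ← dist_def]
    exact dist_pos.2 hne
  calc pnorm (g a - g b) ≤ L * pnorm (a - b) := hlip a ha b hb
    _ ≤ L * pnorm (a - b + (g a - g b)) := by
      gcongr; exact pnorm_left_le_pnorm_add_of_mem_perp hV hv hw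
    _ < s * pnorm (a - b + (g a - g b)) := by gcongr

lemma pnorm_le_of_mem_cone (hV : V ∈ PSet n m) {p q v w : Para n} {s : ℝ} (hs : 0 ≤ s)
    (hs1 : s < 1) (hv : v ∈ V) (hw : w ∈ perp V) (hqp : q - p = v + w)
    (hq : q ∈ cone p V s) : pnorm w ≤ s / √(1 - s ^ 2) * pnorm v := by
  have hlt := (mem_cone_iff_of_sub_eq_add hV hv hw hqp).1 hq
  refine le_div_sqrt_one_sub_sq_mul (pnorm_nonneg w) (pnorm_nonneg v) hs hs1 ?_
  rw [← pnorm_add_sq_of_mem_perp hV hv hw, ← mul_pow]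
  exact pow_le_pow_left₀ (pnorm_nonneg w) hlt.le 2

lemma isLipGraphOver_of_diff_cone_eq_empty (hV : V ∈ PSet n m) {s : ℝ} (hs : 0 < s)
    (hs1 : s < 1) (hG : ∀ p ∈ G, (G \ {p}) \ cone p V s = ∅) :
    IsLipGraphOver n m (s / √(1 - s ^ 2)) V G := by
  choose v hvV w hwP hvw using exists_add_mem_perp V
  have hlip : ∀ q ∈ G, ∀ q' ∈ G,
      pnorm (w q - w q') ≤ s / √(1 - s ^ 2) * pnorm (v q - v q') := by
    intro q hq q' hq'
    rcases eq_or_ne q q' with rfl | hne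
    · simp [pnorm_zero]
    refine pnorm_le_of_mem_cone hV hs.le hs1 (V.sub_mem (hvV q) (hvV q'))
      ((perp V).sub_mem (hwP q) (hwP q')) ?_ (sdiff_eq_empty.1 (hG q' hq') ⟨hq, hne⟩)
    rw [← add_sub_add_comm, hvw, hvw]
  have hinj : InjOn v G := fun q hq q' hq' hvq => by
    have h := hlip q hq q' hq'
    rw [hvq, sub_self, pnorm_zero, mul_zero, ← dist_def] at h
    calc q = v q + w q := (hvw q).symm
      _ = v q' + w q' := by rw [hvq, dist_le_zero.1 h]
      _ = q' := hvw q'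
  have : Nonempty (Para n) := ⟨0⟩
  refine ⟨hV, v '' G, fun p => w (Function.invFunOn v G p), image_subset_iff.2 fun q _ => hvV q,
    fun _ _ => hwP _, ?_, eq_image_add_invFunOn hvw hinj⟩
  rintro _ ⟨q, hq, rfl⟩ _ ⟨q', hq', rfl⟩
  simpa only [hinj.leftInvOn_invFunOn hq, hinj.leftInvOn_invFunOn hq'] using hlip q hq q' hq'

end Para

/-- **Lemma 3.5.** Characterization of `(m,L)`-Lipschitz graphs over `V` by cones:
(1) an `(m,L)`-Lipschitz graph over `V` avoids the complement of `X(p,V,s)` for `s > L`;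
(2) if `G` avoids the complement of `X(p,V,s)` at each `p ∈ G` for some `0 < s < 1`,
then `G` is an `(m, s/√(1-s²))`-Lipschitz graph over `V`. -/
theorem lipschitz_graph_cone_characterization (n m : ℕ) (V : Submodule ℝ (Para n))
    (hV : V ∈ PSet n m) (G : Set (Para n)) :
    (∀ L s : ℝ, 0 < L → L < s → IsLipGraphOver n m L V G →
      ∀ p ∈ G, (G \ {p}) \ cone p (V : Set (Para n)) s = ∅) ∧
    (∀ s : ℝ, 0 < s → s < 1 →
      (∀ p ∈ G, (G \ {p}) \ cone p (V : Set (Para n)) s = ∅) →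
      IsLipGraphOver n m (s / Real.sqrt (1 - s ^ 2)) V G) :=
  ⟨fun _ _ hL hLs hG _ hp => diff_cone_eq_empty_of_isLipGraphOver hL.le hLs hG hp,
    fun _ hs hs1 hG => isLipGraphOver_of_diff_cone_eq_empty hV hs hs1 hG⟩
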